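/- Suppose the data (ρ̄, I, J) satisfies condition (★). Then for all symmetric real n×n matrices C and D, letting Y be the 2n×2n block matrix [[C, D],[D, -C]] (with respect to the coordinates (x₁,…,xₙ,y₁,…,yₙ)), one has ∫_{S^{2n-1}} Σ_{ℓ=1}^{k} ρ_ℓ ⟨π_ℓ u, Y u⟩ / ‖π_ℓ u‖ dσ(u) = 0, where the integrand is defined σ-almost everywhere. -/

import Mathlib

open MeasureTheory Metric Matrix Pointwise

noncomputable section

/-- The rotation-invariant probability measure on the unit sphere of a Euclidean space. -/
noncomputable def sphereProb (ι : Type*) [Fintype ι] :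
    Measure (sphere (0 : EuclideanSpace ℝ ι) 1) :=
  ((volume : Measure (EuclideanSpace ℝ ι)).toSphere Set.univ)⁻¹ •
    (volume : Measure (EuclideanSpace ℝ ι)).toSphere

/-- Support function of a set: `h_X(u) = sup_{x ∈ X} ⟨x, u⟩`. -/
noncomputable def suppFn {ι : Type*} [Fintype ι] (X : Set (EuclideanSpace ℝ ι))
    (u : EuclideanSpace ℝ ι) : ℝ :=
  sSup ((fun x => (inner ℝ x u : ℝ)) '' X)

/-- Mean width: `M(X) = ∫_{S^{d-1}} (h_X(u) + h_X(-u)) dσ(u)`. -/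
noncomputable def meanWidth {ι : Type*} [Fintype ι] (X : Set (EuclideanSpace ℝ ι)) : ℝ :=
  ∫ u : sphere (0 : EuclideanSpace ℝ ι) 1,
    (suppFn X (u : EuclideanSpace ℝ ι) + suppFn X (-(u : EuclideanSpace ℝ ι))) ∂(sphereProb ι)

/-- A convex body: compact, convex, with nonempty interior. -/
def IsConvexBody {ι : Type*} [Fintype ι] (K : Set (EuclideanSpace ℝ ι)) : Prop :=
  IsCompact K ∧ Convex ℝ K ∧ (interior K).Nonempty

/-- `ℝ^{2n}` with coordinates `(x₁,…,xₙ,y₁,…,yₙ)`: the `xᵢ` are indexed by `Sum.inl i`,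
the `yⱼ` by `Sum.inr j`. -/
abbrev Esp (n : ℕ) := EuclideanSpace ℝ (Fin n ⊕ Fin n)

/-- The standard symplectic matrix `J = [[0, Iₙ],[-Iₙ, 0]]`. -/
def Jmat (n : ℕ) : Matrix (Fin n ⊕ Fin n) (Fin n ⊕ Fin n) ℝ :=
  Matrix.fromBlocks 0 1 (-1) 0

/-- Membership in `Sp(2n)`: `Pᵀ J P = J`. -/
def IsSymplecticMat {n : ℕ} (P : Matrix (Fin n ⊕ Fin n) (Fin n ⊕ Fin n) ℝ) : Prop :=
  Pᵀ * Jmat n * P = Jmat n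

/-- Action of a `2n × 2n` matrix on `ℝ^{2n}`. -/
noncomputable def matAct {n : ℕ} (P : Matrix (Fin n ⊕ Fin n) (Fin n ⊕ Fin n) ℝ) :
    Esp n → Esp n :=
  Matrix.toEuclideanLin P

/-- The standard symplectic form `ω₀ = Σᵢ dxᵢ ∧ dyᵢ` on `ℝ^{2n}`. -/
def stdSymplForm {n : ℕ} (u v : Esp n) : ℝ :=
  ∑ j : Fin n, (u (Sum.inl j) * v (Sum.inr j) - u (Sum.inr j) * v (Sum.inl j))

/-- A symplectomorphism of `ℝ^{2n}`: a smooth diffeomorphism whose differential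
preserves the standard symplectic form `ω₀`. -/
def IsSymplectomorphism {n : ℕ} (f : Esp n → Esp n) : Prop :=
  ContDiff ℝ (⊤ : ℕ∞) f ∧
  (∃ g : Esp n → Esp n, ContDiff ℝ (⊤ : ℕ∞) g ∧
      Function.LeftInverse g f ∧ Function.RightInverse g f) ∧
  ∀ x u v, stdSymplForm (fderiv ℝ f x u) (fderiv ℝ f x v) = stdSymplForm u v

/-- The torus action `(θ₁,…,θₙ)·(z₁,…,zₙ) = (e^{iθ₁}z₁,…,e^{iθₙ}zₙ)` on `ℝ^{2n} = ℂⁿ`,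
`z_j = x_j + i y_j`. -/
def torusAct {n : ℕ} (θ : Fin n → ℝ) (u : Esp n) : Esp n :=
  (WithLp.equiv 2 _).symm <| Sum.elim
    (fun j => Real.cos (θ j) * u (Sum.inl j) - Real.sin (θ j) * u (Sum.inr j))
    (fun j => Real.sin (θ j) * u (Sum.inl j) + Real.cos (θ j) * u (Sum.inr j))

/-- A toric subset of `ℝ^{2n}`: one invariant under the standard torus action. -/
def IsToric {n : ℕ} (X : Set (Esp n)) : Prop :=
  ∀ θ : Fin n → ℝ, torusAct θ '' X = X

/-- The `ℝ`-linear action of a complex `n × n` matrix on `ℝ^{2n} = ℂⁿ`, via `z_j = x_j + i y_j`. -/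
def unitaryAct {n : ℕ} (Q : Matrix (Fin n) (Fin n) ℂ) (u : Esp n) : Esp n :=
  (WithLp.equiv 2 _).symm <| Sum.elim
    (fun j => (Q.mulVec (fun m => Complex.mk (u (Sum.inl m)) (u (Sum.inr m))) j).re)
    (fun j => (Q.mulVec (fun m => Complex.mk (u (Sum.inl m)) (u (Sum.inr m))) j).im)

/-- Orthogonal projection of Euclidean space onto the span of the coordinate
vectors indexed by `A`. -/
def coordProj {ι : Type*} [Fintype ι] [DecidableEq ι] (A : Finset ι)
    (u : EuclideanSpace ℝ ι) : EuclideanSpace ℝ ι :=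
  (WithLp.equiv 2 _).symm fun i => if i ∈ A then u i else 0

/-- The index set of `V_ℓ = span({e_i : i ∈ I_ℓ} ∪ {f_j : j ∈ J_ℓ})` inside `Fin n ⊕ Fin n`. -/
def sumIdx {n k : ℕ} (I J : Fin k → Finset (Fin n)) (ℓ : Fin k) : Finset (Fin n ⊕ Fin n) :=
  (I ℓ).image Sum.inl ∪ (J ℓ).image Sum.inr

/-- The product of balls `𝒫(ρ̄, I, J) = ρ₁B^{m₁} × ⋯ × ρ_k B^{m_k}`:
all sums `v₁ + ⋯ + v_k` where `v_ℓ` lies in the closed ball of radius `ρ_ℓ` in `V_ℓ`. -/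
def prodBalls {n k : ℕ} (ρ : Fin k → ℝ) (I J : Fin k → Finset (Fin n)) : Set (Esp n) :=
  {v | ∃ w : Fin k → Esp n, v = ∑ ℓ, w ℓ ∧
    ∀ ℓ, (∀ i, i ∉ sumIdx I J ℓ → w ℓ i = 0) ∧ ‖w ℓ‖ ≤ ρ ℓ}

/-- The data `(ρ̄, I, J)` is admissible: radii positive, `I` and `J` are partitions of
`{1,…,n}` into pairwise disjoint (possibly empty) subsets, and for each `ℓ` at most one
of `I_ℓ`, `J_ℓ` is empty. -/
def AdmissibleData {n k : ℕ} (ρ : Fin k → ℝ) (I J : Fin k → Finset (Fin n)) : Prop :=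
  (∀ ℓ, 0 < ρ ℓ) ∧
  (∀ ℓ ℓ', ℓ ≠ ℓ' → Disjoint (I ℓ) (I ℓ')) ∧ (∀ i, ∃ ℓ, i ∈ I ℓ) ∧
  (∀ ℓ ℓ', ℓ ≠ ℓ' → Disjoint (J ℓ) (J ℓ')) ∧ (∀ i, ∃ ℓ, i ∈ J ℓ) ∧
  (∀ ℓ, (I ℓ).Nonempty ∨ (J ℓ).Nonempty)

/-- Condition (★): if `I_ℓ ∩ J_{ℓ'} ≠ ∅` then `|I_ℓ|+|J_ℓ| = |I_{ℓ'}|+|J_{ℓ'}|`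
and `ρ_ℓ = ρ_{ℓ'}`. -/
def StarCond {n k : ℕ} (ρ : Fin k → ℝ) (I J : Fin k → Finset (Fin n)) : Prop :=
  ∀ ℓ ℓ', ((I ℓ) ∩ (J ℓ')).Nonempty →
    (I ℓ).card + (J ℓ).card = (I ℓ').card + (J ℓ').card ∧ ρ ℓ = ρ ℓ'

set_option linter.unusedSectionVars false

variable {ι : Type*} [Fintype ι] [DecidableEq ι]


def spIso (ε : ι → ℝ) (hε : ∀ i, ε i * ε i = 1) (e : Equiv.Perm ι) :
    EuclideanSpace ℝ ι ≃ₗᵢ[ℝ] EuclideanSpace ℝ ι where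
  toLinearEquiv :=
  { toFun := fun u => (WithLp.equiv 2 _).symm fun i => ε i * u (e i)
    invFun := fun u => (WithLp.equiv 2 _).symm fun i => ε (e.symm i) * u (e.symm i)
    map_add' := by intro u v; ext i; simp [mul_add]
    map_smul' := by intro c u; ext i; simp [mul_comm, mul_left_comm]
    left_inv := by
      intro u; ext i
      simp only [WithLp.equiv_symm_apply, PiLp.toLp_apply, ← mul_assoc, hε, Equiv.apply_symm_apply, one_mul]
    right_inv := by
      intro u; ext i
      simp only [WithLp.equiv_symm_apply, PiLp.toLp_apply, ← mul_assoc, Equiv.symm_apply_apply]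
      rw [hε, one_mul] }
  norm_map' := by
    intro u
    show ‖(WithLp.equiv 2 _).symm fun i => ε i * u (e i)‖ = ‖u‖
    rw [EuclideanSpace.norm_eq, EuclideanSpace.norm_eq]
    congr 1
    rw [← Equiv.sum_comp e (fun i => ‖u i‖ ^ 2)]
    refine Finset.sum_congr rfl fun i _ => ?_
    simp only [WithLp.equiv_symm_apply, PiLp.toLp_apply, norm_mul, mul_pow, Real.norm_eq_abs, sq_abs]
    rw [sq, hε, one_mul]

lemma spIso_apply (ε : ι → ℝ) (hε : ∀ i, ε i * ε i = 1) (e : Equiv.Perm ι)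
    (u : EuclideanSpace ℝ ι) (i : ι) : spIso ε hε e u i = ε i * u (e i) := rfl


variable {E : Type*} [NormedAddCommGroup E] [InnerProductSpace ℝ E] [MeasurableSpace E] [BorelSpace E]

def sphMap (T : E ≃ₗᵢ[ℝ] E) : sphere (0 : E) 1 → sphere (0 : E) 1 :=
  fun u => ⟨T u, by
    have := u.2
    simp only [mem_sphere_iff_norm, sub_zero] at this ⊢
    rw [T.norm_map]; exact this⟩

lemma sphMap_coe (T : E ≃ₗᵢ[ℝ] E) (u : sphere (0 : E) 1) :
    (sphMap T u : E) = T u := rfl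

def sphMapME (T : E ≃ₗᵢ[ℝ] E) : sphere (0 : E) 1 ≃ᵐ sphere (0 : E) 1 where
  toFun := sphMap T
  invFun := sphMap T.symm
  left_inv := fun u => Subtype.ext (T.symm_apply_apply u)
  right_inv := fun u => Subtype.ext (T.apply_symm_apply u)
  measurable_toFun := (Continuous.subtype_mk (T.continuous.comp continuous_subtype_val) _).measurable
  measurable_invFun := (Continuous.subtype_mk (T.symm.continuous.comp continuous_subtype_val) _).measurable

lemma sphMap_measurable (T : E ≃ₗᵢ[ℝ] E) : Measurable (sphMap T) :=
  (Continuous.subtype_mk (T.continuous.comp continuous_subtype_val) _).measurable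

lemma map_toSphere (T : EuclideanSpace ℝ ι ≃ₗᵢ[ℝ] EuclideanSpace ℝ ι) :
    Measure.map (sphMap T) (volume : Measure (EuclideanSpace ℝ ι)).toSphere
      = (volume : Measure (EuclideanSpace ℝ ι)).toSphere := by
  ext s hs
  rw [Measure.map_apply (sphMap_measurable T) hs,
      Measure.toSphere_apply' _ (sphMap_measurable T hs),
      Measure.toSphere_apply' _ hs]
  have h1 : (Subtype.val '' (sphMap T ⁻¹' s)) = T ⁻¹' (Subtype.val '' s) := by
    ext x
    constructor
    · rintro ⟨u, hu, rfl⟩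
      exact ⟨sphMap T u, hu, rfl⟩
    · rintro ⟨v, hv, hvx⟩
      have hx : x ∈ sphere (0 : EuclideanSpace ℝ ι) 1 := by
        have h1 := v.2
        simp only [mem_sphere_iff_norm, sub_zero] at h1 ⊢
        rw [← T.norm_map x, ← hvx, h1]
      refine ⟨⟨x, hx⟩, ?_, rfl⟩
      show sphMap T ⟨x, hx⟩ ∈ s
      have : sphMap T ⟨x, hx⟩ = v := Subtype.ext hvx.symm
      rw [this]; exact hv
  have h2 : Set.Ioo (0:ℝ) 1 • (T ⁻¹' (Subtype.val '' s))
      = T ⁻¹' (Set.Ioo (0:ℝ) 1 • (Subtype.val '' s)) := by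
    ext x
    simp only [Set.mem_smul, Set.mem_preimage]
    constructor
    · rintro ⟨r, hr, y, hy, rfl⟩
      exact ⟨r, hr, T y, hy, (_root_.map_smul T r y).symm⟩
    · rintro ⟨r, hr, z, hz, hx⟩
      refine ⟨r, hr, T.symm z, by simpa using hz, ?_⟩
      apply T.injective
      rw [_root_.map_smul, T.apply_symm_apply, hx]
  rw [h1, h2]
  congr 1
  have hco : ⇑(T.toHomeomorph.toMeasurableEquiv) = ⇑T := rfl
  have := (T.toHomeomorph.toMeasurableEquiv.map_apply
    (μ := (volume : Measure (EuclideanSpace ℝ ι)))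
    (Set.Ioo (0:ℝ) 1 • (Subtype.val '' s))).symm
  rw [hco] at this
  rw [this, T.measurePreserving.map_eq]

lemma integral_sphMap (T : EuclideanSpace ℝ ι ≃ₗᵢ[ℝ] EuclideanSpace ℝ ι)
    (f : sphere (0 : EuclideanSpace ℝ ι) 1 → ℝ) :
    ∫ u, f (sphMap T u) ∂(sphereProb ι) = ∫ u, f u ∂(sphereProb ι) := by
  have hmp : MeasurePreserving (sphMap T) (sphereProb ι) (sphereProb ι) := by
    refine ⟨sphMap_measurable T, ?_⟩
    rw [sphereProb, Measure.map_smul, map_toSphere]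
  exact hmp.integral_comp (sphMapME T).measurableEmbedding f



instance : IsFiniteMeasure (sphereProb ι) := by
  constructor
  rw [sphereProb, Measure.smul_apply, smul_eq_mul]
  by_cases h : (volume : Measure (EuclideanSpace ℝ ι)).toSphere Set.univ = 0
  · rw [h, mul_zero]; exact ENNReal.zero_lt_top
  · rw [ENNReal.inv_mul_cancel h (measure_ne_top _ _)]; exact ENNReal.one_lt_top

lemma coordProj_apply (A : Finset ι) (u : EuclideanSpace ℝ ι) (i : ι) :
    coordProj A u i = if i ∈ A then u i else 0 := rfl

lemma coordProj_continuous (A : Finset ι) : Continuous (coordProj A) := by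
  apply (PiLp.continuous_toLp 2 (fun _ : ι => ℝ)).comp
  apply continuous_pi
  intro i
  by_cases h : i ∈ A
  · simp only [if_pos h]
    exact (continuous_apply i).comp (PiLp.continuous_ofLp 2 (fun _ : ι => ℝ))
  · simp only [if_neg h]
    exact continuous_const

lemma eval_continuous (i : ι) : Continuous (fun u : EuclideanSpace ℝ ι => u i) :=
  (continuous_apply i).comp (PiLp.continuous_ofLp 2 (fun _ : ι => ℝ))

lemma abs_coord_le_norm (x : EuclideanSpace ℝ ι) (i : ι) : |x i| ≤ ‖x‖ := by
  rw [EuclideanSpace.norm_eq]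
  calc |x i| = Real.sqrt (‖x i‖ ^ 2) := by rw [Real.norm_eq_abs, Real.sqrt_sq_eq_abs, abs_abs]
  _ ≤ _ := Real.sqrt_le_sqrt (Finset.single_le_sum (f := fun j => ‖x j‖ ^ 2)
      (fun _ _ => sq_nonneg _) (Finset.mem_univ i))

lemma term_bound (A : Finset ι) (i j : ι) (hi : i ∈ A) (u : EuclideanSpace ℝ ι)
    (hu : ‖u‖ = 1) : |u i * u j / ‖coordProj A u‖| ≤ 1 := by
  have h1 : |u i| ≤ ‖coordProj A u‖ := by
    have := abs_coord_le_norm (coordProj A u) i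
    rwa [coordProj_apply, if_pos hi] at this
  have h2 : |u j| ≤ 1 := hu ▸ abs_coord_le_norm u j
  by_cases h : ‖coordProj A u‖ = 0
  · have : u i = 0 := by
      have := h1; rw [h] at this; exact abs_nonpos_iff.mp this
    simp [this, h]
  · rw [abs_div, abs_of_nonneg (norm_nonneg _), div_le_one (lt_of_le_of_ne (norm_nonneg _) (Ne.symm h))]
    calc |u i * u j| = |u i| * |u j| := abs_mul _ _
    _ ≤ ‖coordProj A u‖ * 1 := mul_le_mul h1 h2 (abs_nonneg _) (norm_nonneg _)
    _ = ‖coordProj A u‖ := mul_one _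

lemma term_integrable (A : Finset ι) (i j : ι) (hi : i ∈ A) :
    Integrable (fun u : sphere (0 : EuclideanSpace ℝ ι) 1 =>
      (u : EuclideanSpace ℝ ι) i * (u : EuclideanSpace ℝ ι) j /
        ‖coordProj A (u : EuclideanSpace ℝ ι)‖) (sphereProb ι) := by
  have hmeas : Measurable (fun u : sphere (0 : EuclideanSpace ℝ ι) 1 =>
      (u : EuclideanSpace ℝ ι) i * (u : EuclideanSpace ℝ ι) j /
        ‖coordProj A (u : EuclideanSpace ℝ ι)‖) := by
    have hc : Continuous (fun u : sphere (0 : EuclideanSpace ℝ ι) 1 => (u : EuclideanSpace ℝ ι)) :=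
      continuous_subtype_val
    exact Measurable.div
      (((eval_continuous i).comp hc).measurable.mul ((eval_continuous j).comp hc).measurable)
      (continuous_norm.comp ((coordProj_continuous A).comp hc)).measurable
  refine (integrable_const (1 : ℝ)).mono' hmeas.aestronglyMeasurable ?_
  refine Filter.Eventually.of_forall fun u => ?_
  have hu : ‖(u : EuclideanSpace ℝ ι)‖ = 1 := by
    have h := u.2
    simpa [mem_sphere_iff_norm] using h
  rw [Real.norm_eq_abs]
  exact term_bound A i j hi u hu

lemma coordProj_spIso (ε : ι → ℝ) (hε : ∀ i, ε i * ε i = 1) (e : Equiv.Perm ι)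
    (A : Finset ι) (u : EuclideanSpace ℝ ι) :
    coordProj A (spIso ε hε e u) = spIso ε hε e (coordProj (A.image e) u) := by
  ext i
  rw [coordProj_apply, spIso_apply]
  have hmem : e i ∈ A.image ⇑e ↔ i ∈ A := by
    constructor
    · intro h
      obtain ⟨x, hx, hxe⟩ := Finset.mem_image.mp h
      rwa [← e.injective hxe]
    · intro h; exact Finset.mem_image_of_mem _ h
  by_cases h : i ∈ A
  · rw [if_pos h, spIso_apply, coordProj_apply, if_pos (hmem.mpr h)]
  · rw [if_neg h, spIso_apply, coordProj_apply, if_neg (fun hh => h (hmem.mp hh)), mul_zero]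

lemma norm_coordProj_spIso (ε : ι → ℝ) (hε : ∀ i, ε i * ε i = 1) (e : Equiv.Perm ι)
    (A : Finset ι) (u : EuclideanSpace ℝ ι) :
    ‖coordProj A (spIso ε hε e u)‖ = ‖coordProj (A.image ⇑e) u‖ := by
  rw [coordProj_spIso, (spIso ε hε e).norm_map]

/-- Off-diagonal integrals vanish, by a coordinate sign flip. -/
lemma integral_offdiag (A : Finset ι) (i j : ι) (hij : i ≠ j) :
    ∫ u : sphere (0 : EuclideanSpace ℝ ι) 1,
      ((u : EuclideanSpace ℝ ι) i * (u : EuclideanSpace ℝ ι) j /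
        ‖coordProj A (u : EuclideanSpace ℝ ι)‖) ∂(sphereProb ι) = 0 := by
  set ε : ι → ℝ := fun m => if m = j then -1 else 1 with hεdef
  have hε : ∀ m, ε m * ε m = 1 := by intro m; by_cases h : m = j <;> simp [hεdef, h]
  set T := spIso ε hε (Equiv.refl ι) with hT
  set F : sphere (0 : EuclideanSpace ℝ ι) 1 → ℝ := fun u =>
    (u : EuclideanSpace ℝ ι) i * (u : EuclideanSpace ℝ ι) j /
      ‖coordProj A (u : EuclideanSpace ℝ ι)‖ with hFdef
  have himg : A.image ⇑(Equiv.refl ι) = A := by simp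
  have key : ∀ u, F (sphMap T u) = - F u := by
    intro u
    have h1 : (sphMap T u : EuclideanSpace ℝ ι) i = (u : EuclideanSpace ℝ ι) i := by
      rw [sphMap_coe, hT, spIso_apply]
      simp [hεdef, hij]
    have h2 : (sphMap T u : EuclideanSpace ℝ ι) j = -(u : EuclideanSpace ℝ ι) j := by
      rw [sphMap_coe, hT, spIso_apply]
      simp [hεdef]
    have h3 : ‖coordProj A ((sphMap T u : EuclideanSpace ℝ ι))‖
        = ‖coordProj A (u : EuclideanSpace ℝ ι)‖ := by
      rw [sphMap_coe, hT, norm_coordProj_spIso, himg]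
    rw [hFdef]
    simp only [h1, h2, h3]
    ring_nf
  have h4 : ∫ u, F u ∂(sphereProb ι) = - ∫ u, F u ∂(sphereProb ι) := by
    conv_lhs => rw [← integral_sphMap T F]
    rw [← integral_neg]
    exact integral_congr_ae (Filter.Eventually.of_forall key)
  linarith

lemma subtypeCongr_left_apply {α : Type*} {p q : α → Prop} [DecidablePred p] [DecidablePred q]
    (e : { x // p x } ≃ { x // q x }) (f : { x // ¬p x } ≃ { x // ¬q x }) {a : α} (h : p a) :
    (e.subtypeCongr f) a = ↑(e ⟨a, h⟩) := by
  simp [Equiv.subtypeCongr, h]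

/-- There is a permutation sending `a` to `a'` and `A` onto `A'`. -/
lemma exists_perm (A A' : Finset ι) (a a' : ι) (ha : a ∈ A) (ha' : a' ∈ A')
    (hcard : A.card = A'.card) :
    ∃ e : Equiv.Perm ι, e a = a' ∧ A.image ⇑e = A' := by
  have hc1 : Fintype.card {x // x ∈ A} = Fintype.card {x // x ∈ A'} := by
    rw [Fintype.card_coe, Fintype.card_coe, hcard]
  have ep0 : {x // x ∈ A} ≃ {x // x ∈ A'} := Fintype.equivOfCardEq hc1
  set ep : {x // x ∈ A} ≃ {x // x ∈ A'} :=
    ep0.trans (Equiv.swap (ep0 ⟨a, ha⟩) ⟨a', ha'⟩) with hep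
  have hepa : ep ⟨a, ha⟩ = ⟨a', ha'⟩ := by
    rw [hep]; simp [Equiv.swap_apply_left]
  have hc2 : Fintype.card {x // ¬ x ∈ A} = Fintype.card {x // ¬ x ∈ A'} := by
    rw [Fintype.card_subtype_compl, Fintype.card_subtype_compl]
    rw [hc1]
  have en : {x // ¬ x ∈ A} ≃ {x // ¬ x ∈ A'} := Fintype.equivOfCardEq hc2
  refine ⟨ep.subtypeCongr en, ?_, ?_⟩
  · rw [subtypeCongr_left_apply _ _ ha, hepa]
  · have hsub : A.image ⇑(ep.subtypeCongr en) ⊆ A' := by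
      intro x hx
      obtain ⟨y, hy, hyx⟩ := Finset.mem_image.mp hx
      rw [subtypeCongr_left_apply _ _ hy] at hyx
      rw [← hyx]
      exact (ep ⟨y, hy⟩).2
    refine Finset.eq_of_subset_of_card_le hsub ?_
    rw [Finset.card_image_of_injective _ (Equiv.injective _), hcard]

/-- Diagonal integrals only depend on the cardinality of `A`. -/
lemma integral_diag_congr (A A' : Finset ι) (a a' : ι) (ha : a ∈ A) (ha' : a' ∈ A')
    (hcard : A.card = A'.card) :
    ∫ u : sphere (0 : EuclideanSpace ℝ ι) 1,
      ((u : EuclideanSpace ℝ ι) a * (u : EuclideanSpace ℝ ι) a /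
        ‖coordProj A (u : EuclideanSpace ℝ ι)‖) ∂(sphereProb ι)
    = ∫ u : sphere (0 : EuclideanSpace ℝ ι) 1,
      ((u : EuclideanSpace ℝ ι) a' * (u : EuclideanSpace ℝ ι) a' /
        ‖coordProj A' (u : EuclideanSpace ℝ ι)‖) ∂(sphereProb ι) := by
  obtain ⟨e, hea, himg⟩ := exists_perm A A' a a' ha ha' hcard
  have hε : ∀ i : ι, (1 : ℝ) * 1 = 1 := fun _ => one_mul 1
  set T := spIso (fun _ => (1:ℝ)) (fun _ => one_mul 1) e with hT
  set F : sphere (0 : EuclideanSpace ℝ ι) 1 → ℝ := fun u =>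
    (u : EuclideanSpace ℝ ι) a * (u : EuclideanSpace ℝ ι) a /
      ‖coordProj A (u : EuclideanSpace ℝ ι)‖ with hFdef
  rw [← integral_sphMap T F]
  refine integral_congr_ae (Filter.Eventually.of_forall fun u => ?_)
  have h1 : (sphMap T u : EuclideanSpace ℝ ι) a = (u : EuclideanSpace ℝ ι) a' := by
    rw [sphMap_coe, hT, spIso_apply, one_mul, hea]
  have h3 : ‖coordProj A ((sphMap T u : EuclideanSpace ℝ ι))‖
      = ‖coordProj A' (u : EuclideanSpace ℝ ι)‖ := by
    rw [sphMap_coe, hT, norm_coordProj_spIso, himg]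
  rw [hFdef]
  simp only [h1, h3]

/-- partition sum swap -/
lemma partition_sum {n k : ℕ} (P : Fin k → Finset (Fin n))
    (hd : ∀ ℓ ℓ', ℓ ≠ ℓ' → Disjoint (P ℓ) (P ℓ'))
    (hc : ∀ i, ∃ ℓ, i ∈ P ℓ) (f : Fin k → Fin n → ℝ) (g : Fin n → ℝ)
    (hfg : ∀ ℓ i, i ∈ P ℓ → f ℓ i = g i) :
    ∑ ℓ, ∑ i ∈ P ℓ, f ℓ i = ∑ i, g i := by
  have h1 : ∑ ℓ, ∑ i ∈ P ℓ, f ℓ i = ∑ ℓ, ∑ i ∈ P ℓ, g i :=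
    Finset.sum_congr rfl fun ℓ _ => Finset.sum_congr rfl fun i hi => hfg ℓ i hi
  rw [h1, ← Finset.sum_biUnion (fun ℓ _ ℓ' _ hne => hd ℓ ℓ' hne)]
  congr 1
  ext i
  simp only [Finset.mem_biUnion, Finset.mem_univ, true_and]
  exact ⟨fun _ => trivial, fun _ => hc i⟩


/-- under condition (★), for every matrix `Y = [[C, D],[D, -C]]` with `C, D`
symmetric, `∫_{S^{2n-1}} Σ_ℓ ρ_ℓ ⟨π_ℓ u, Y u⟩ / ‖π_ℓ u‖ dσ(u) = 0`. -/
theorem stmt_15 {n k : ℕ} (ρ : Fin k → ℝ) (I J : Fin k → Finset (Fin n))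
    (hadm : AdmissibleData ρ I J) (hstar : StarCond ρ I J)
    (C D : Matrix (Fin n) (Fin n) ℝ) (hC : C.IsSymm) (hD : D.IsSymm) :
    (∫ u : sphere (0 : Esp n) 1,
        (∑ ℓ, ρ ℓ *
          (inner ℝ (coordProj (sumIdx I J ℓ) (u : Esp n))
              (matAct (Matrix.fromBlocks C D D (-C)) (u : Esp n)) : ℝ) /
            ‖coordProj (sumIdx I J ℓ) (u : Esp n)‖)
        ∂(sphereProb (Fin n ⊕ Fin n))) = 0 := by
  classical
  obtain ⟨hρpos, hIdisj, hIcov, hJdisj, hJcov, hNe⟩ := hadm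
  set Y := Matrix.fromBlocks C D D (-C) with hY
  set A : Fin k → Finset (Fin n ⊕ Fin n) := sumIdx I J with hA
  set val : Finset (Fin n ⊕ Fin n) → (Fin n ⊕ Fin n) → ℝ := fun B a =>
    ∫ u : sphere (0 : Esp n) 1,
      ((u : Esp n) a * (u : Esp n) a / ‖coordProj B (u : Esp n)‖)
      ∂(sphereProb (Fin n ⊕ Fin n)) with hval
  -- matrix action entrywise
  have hmat : ∀ (u : Esp n) (i : Fin n ⊕ Fin n), matAct Y u i = ∑ j, Y i j * u j := by
    intro u i
    rfl
  -- pointwise identity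
  have hpt : ∀ u : Esp n,
      (∑ ℓ, ρ ℓ * (inner ℝ (coordProj (A ℓ) u) (matAct Y u) : ℝ) / ‖coordProj (A ℓ) u‖)
      = ∑ ℓ, ∑ i ∈ A ℓ, ∑ j, (ρ ℓ * Y i j) * (u i * u j / ‖coordProj (A ℓ) u‖) := by
    intro u
    refine Finset.sum_congr rfl fun ℓ _ => ?_
    have hinner : (inner ℝ (coordProj (A ℓ) u) (matAct Y u) : ℝ)
        = ∑ i ∈ A ℓ, ∑ j, Y i j * (u i * u j) := by
      rw [PiLp.inner_apply]
      simp only [RCLike.inner_apply', starRingEnd_apply, star_trivial]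
      have : ∀ i, coordProj (A ℓ) u i * matAct Y u i
          = if i ∈ A ℓ then ∑ j, Y i j * (u i * u j) else 0 := by
        intro i
        rw [coordProj_apply, hmat]
        by_cases h : i ∈ A ℓ
        · rw [if_pos h, if_pos h, Finset.mul_sum]
          exact Finset.sum_congr rfl fun j _ => by ring
        · rw [if_neg h, if_neg h, zero_mul]
      simp_rw [this]
      rw [Finset.sum_ite_mem, Finset.univ_inter]
    rw [hinner]
    simp only [Finset.mul_sum, Finset.sum_div]
    exact Finset.sum_congr rfl fun i _ => Finset.sum_congr rfl fun j _ => by ring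
  have hfun : (fun u : sphere (0 : Esp n) 1 =>
      ∑ ℓ, ρ ℓ * (inner ℝ (coordProj (A ℓ) (u : Esp n)) (matAct Y (u : Esp n)) : ℝ) /
        ‖coordProj (A ℓ) (u : Esp n)‖)
      = fun u : sphere (0 : Esp n) 1 =>
        ∑ ℓ, ∑ i ∈ A ℓ, ∑ j, (ρ ℓ * Y i j) *
          ((u : Esp n) i * (u : Esp n) j / ‖coordProj (A ℓ) (u : Esp n)‖) :=
    funext fun u => hpt u
  show (∫ u : sphere (0 : Esp n) 1,
      (∑ ℓ, ρ ℓ * (inner ℝ (coordProj (A ℓ) (u : Esp n)) (matAct Y (u : Esp n)) : ℝ) /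
        ‖coordProj (A ℓ) (u : Esp n)‖) ∂(sphereProb (Fin n ⊕ Fin n))) = 0
  rw [hfun]
  -- integrability of individual terms
  have hint : ∀ (B : Finset (Fin n ⊕ Fin n)) (i : Fin n ⊕ Fin n), i ∈ B →
      ∀ (j : Fin n ⊕ Fin n) (c : ℝ), Integrable (fun u : sphere (0 : Esp n) 1 =>
        c * ((u : Esp n) i * (u : Esp n) j / ‖coordProj B (u : Esp n)‖))
        (sphereProb (Fin n ⊕ Fin n)) :=
    fun B i hi j c => (term_integrable B i j hi).const_mul c
  rw [integral_finset_sum _ (fun ℓ _ => integrable_finset_sum _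
    (fun i hi => integrable_finset_sum _ (fun j _ => hint (A ℓ) i hi j _)))]
  have hswap : ∀ ℓ : Fin k, (∫ u : sphere (0 : Esp n) 1,
      (∑ i ∈ A ℓ, ∑ j, (ρ ℓ * Y i j) *
        ((u : Esp n) i * (u : Esp n) j / ‖coordProj (A ℓ) (u : Esp n)‖))
      ∂(sphereProb (Fin n ⊕ Fin n)))
      = ∑ i ∈ A ℓ, (ρ ℓ * Y i i) * val (A ℓ) i := by
    intro ℓ
    rw [integral_finset_sum _ (fun i hi => integrable_finset_sum _
      (fun j _ => hint (A ℓ) i hi j _))]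
    refine Finset.sum_congr rfl fun i hi => ?_
    rw [integral_finset_sum _ (fun j _ => hint (A ℓ) i hi j _)]
    rw [Finset.sum_eq_single i]
    · rw [integral_const_mul]
    · intro j _ hji
      rw [integral_const_mul, integral_offdiag (A ℓ) i j (Ne.symm hji), mul_zero]
    · intro h; exact absurd (Finset.mem_univ i) h
  simp_rw [hswap]
  -- split each A ℓ
  have hdisj : ∀ ℓ, Disjoint ((I ℓ).image Sum.inl) ((J ℓ).image Sum.inr) := by
    intro ℓ
    rw [Finset.disjoint_left]
    intro x hx hx'
    obtain ⟨a, _, rfl⟩ := Finset.mem_image.mp hx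
    obtain ⟨b, _, hb⟩ := Finset.mem_image.mp hx'
    exact Sum.inl_ne_inr hb.symm
  have hsplit : ∀ ℓ : Fin k, (∑ i ∈ A ℓ, (ρ ℓ * Y i i) * val (A ℓ) i)
      = (∑ i ∈ I ℓ, (ρ ℓ * C i i) * val (A ℓ) (Sum.inl i))
        + ∑ j ∈ J ℓ, -((ρ ℓ * C j j) * val (A ℓ) (Sum.inr j)) := by
    intro ℓ
    have : A ℓ = (I ℓ).image Sum.inl ∪ (J ℓ).image Sum.inr := rfl
    rw [this, Finset.sum_union (hdisj ℓ),
      Finset.sum_image (fun a _ b _ h => Sum.inl_injective h),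
      Finset.sum_image (fun a _ b _ h => Sum.inr_injective h)]
    rw [← this]
    have e1 : (∑ i ∈ I ℓ, (ρ ℓ * Y (Sum.inl i) (Sum.inl i)) * val (A ℓ) (Sum.inl i))
        = ∑ i ∈ I ℓ, (ρ ℓ * C i i) * val (A ℓ) (Sum.inl i) :=
      Finset.sum_congr rfl fun i _ => by
        simp only [hY, Matrix.fromBlocks_apply₁₁]
    have e2 : (∑ j ∈ J ℓ, (ρ ℓ * Y (Sum.inr j) (Sum.inr j)) * val (A ℓ) (Sum.inr j))
        = ∑ j ∈ J ℓ, -((ρ ℓ * C j j) * val (A ℓ) (Sum.inr j)) :=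
      Finset.sum_congr rfl fun j _ => by
        simp only [hY, Matrix.fromBlocks_apply₂₂, Matrix.neg_apply]
        ring
    rw [e1, e2]
  simp_rw [hsplit]
  rw [Finset.sum_add_distrib]
  -- choice functions
  have hℓI : ∀ i, i ∈ I ((hIcov i).choose) := fun i => (hIcov i).choose_spec
  have hℓJ : ∀ i, i ∈ J ((hJcov i).choose) := fun i => (hJcov i).choose_spec
  set ℓI : Fin n → Fin k := fun i => (hIcov i).choose with hℓIdef
  set ℓJ : Fin n → Fin k := fun i => (hJcov i).choose with hℓJdef
  have hIuniq : ∀ ℓ i, i ∈ I ℓ → ℓ = ℓI i := by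
    intro ℓ i hi
    by_contra hne
    exact Finset.disjoint_left.mp (hIdisj ℓ _ hne) hi (hℓI i)
  have hJuniq : ∀ ℓ i, i ∈ J ℓ → ℓ = ℓJ i := by
    intro ℓ i hi
    by_contra hne
    exact Finset.disjoint_left.mp (hJdisj ℓ _ hne) hi (hℓJ i)
  have hS1 : (∑ ℓ, ∑ i ∈ I ℓ, (ρ ℓ * C i i) * val (A ℓ) (Sum.inl i))
      = ∑ i, (ρ (ℓI i) * C i i) * val (A (ℓI i)) (Sum.inl i) := by
    refine partition_sum I hIdisj hIcov _ _ ?_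
    intro ℓ i hi
    rw [← hIuniq ℓ i hi]
  have hS2 : (∑ ℓ, ∑ j ∈ J ℓ, -((ρ ℓ * C j j) * val (A ℓ) (Sum.inr j)))
      = ∑ i, -((ρ (ℓJ i) * C i i) * val (A (ℓJ i)) (Sum.inr i)) := by
    refine partition_sum J hJdisj hJcov _ _ ?_
    intro ℓ i hi
    rw [← hJuniq ℓ i hi]
  rw [hS1, hS2, ← Finset.sum_add_distrib]
  refine Finset.sum_eq_zero fun i _ => ?_
  -- use the star condition
  obtain ⟨hcardeq, hρeq⟩ := hstar (ℓI i) (ℓJ i)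
    ⟨i, Finset.mem_inter.mpr ⟨hℓI i, hℓJ i⟩⟩
  have hcardA : ∀ ℓ : Fin k, (A ℓ).card = (I ℓ).card + (J ℓ).card := by
    intro ℓ
    have : A ℓ = (I ℓ).image Sum.inl ∪ (J ℓ).image Sum.inr := rfl
    rw [this, Finset.card_union_of_disjoint (hdisj ℓ),
      Finset.card_image_of_injective _ Sum.inl_injective,
      Finset.card_image_of_injective _ Sum.inr_injective]
  have hvaleq : val (A (ℓI i)) (Sum.inl i) = val (A (ℓJ i)) (Sum.inr i) := by
    refine integral_diag_congr _ _ _ _ ?_ ?_ ?_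
    · exact Finset.mem_union_left _ (Finset.mem_image_of_mem _ (hℓI i))
    · exact Finset.mem_union_right _ (Finset.mem_image_of_mem _ (hℓJ i))
    · rw [hcardA, hcardA, hcardeq]
  rw [hρeq, hvaleq]
  ring

end
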